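/- Let Λ = (W_j, Λ_j, v_j) be a g-fusion frame for H with frame operator S_Λ. Then the family (S_Λ^{-1/2} W_j, Λ_j π_{W_j} S_Λ^{-1/2}, v_j) is a Parseval g-fusion frame, i.e., Σ_{j∈J} v_j² ‖Λ_j π_{W_j} S_Λ^{-1/2} π_{X_j} f‖² = ‖f‖² for all f ∈ H, where X_j = S_Λ^{-1/2} W_j. -/

import Mathlib

open ContinuousLinearMap

/-- Orthogonal projection onto a complete subspace, as an operator on the whole space. -/
noncomputable def pProj {H : Type*} [NormedAddCommGroup H] [InnerProductSpace ℂ H]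
    (V : Submodule ℂ H) [CompleteSpace V] : H →L[ℂ] H :=
  V.subtypeL ∘L V.orthogonalProjectionOnto

/-!
Write `R = S_Λ^{-1/2}`. Since `R` commutes with `R² = S_Λ⁻¹`, it commutes with `S_Λ`, so
`R S_Λ R = 1`. Testing the series defining `S_Λ` against `R f` therefore gives
`∑ v_j² ‖Λ_j π_{W_j} R f‖² = ⟪R f, S_Λ R f⟫ = ‖f‖²`. Finally `π_{X_j}` can be inserted: `R` is
self-adjoint and maps `W_j` into `X_j`, so it maps `X_jᗮ` into `W_jᗮ`, whence
`π_{W_j} R π_{X_j} = π_{W_j} R`.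
-/

theorem mul_mul_eq_one_of_mul_self_eq {M : Type*} [Monoid M] {r s t : M}
    (hrr : r * r = t) (hts : t * s = 1) (hst : s * t = 1) : r * s * r = 1 := by
  let u : Mˣ := ⟨t, s, hts, hst⟩
  have hru : Commute r u := by simp [Commute, SemiconjBy, u, ← hrr, mul_assoc]
  have hrs : Commute r s := hru.units_inv_right
  rw [hrs.eq, mul_assoc, hrr, hst]

section

variable {H : Type*} [NormedAddCommGroup H] [InnerProductSpace ℂ H]

lemma pProj_eq_starProjection (V : Submodule ℂ H) [CompleteSpace V] :
    pProj V = V.starProjection := rfl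

variable [CompleteSpace H]

theorem pProj_apply_apply_pProj_of_map_le {R : H →L[ℂ] H} (hR : IsSelfAdjoint R)
    (W X : Submodule ℂ H) [CompleteSpace W] [CompleteSpace X]
    (hWX : W.map (R : H →ₗ[ℂ] H) ≤ X) (f : H) :
    pProj W (R (pProj X f)) = pProj W (R f) := by
  rw [pProj_eq_starProjection, pProj_eq_starProjection, eq_comm, ← sub_eq_zero, ← map_sub,
    ← map_sub, Submodule.starProjection_apply_eq_zero_iff, Submodule.mem_orthogonal]
  intro w hw
  exact (hR.isSymmetric w _).symm.trans
    (X.sub_starProjection_mem_orthogonal f (R w) (hWX ⟨w, hw, rfl⟩))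

theorem re_inner_apply_apply_eq_norm_sq {R S : H →L[ℂ] H} (hR : IsSelfAdjoint R)
    (hRSR : R * S * R = 1) (f : H) : RCLike.re (inner ℂ (R f) (S (R f))) = ‖f‖ ^ 2 := by
  rw [show inner ℂ (R f) (S (R f)) = inner ℂ f ((R * S * R) f) from hR.isSymmetric _ _, hRSR,
    one_apply_eq_self, inner_self_eq_norm_sq]

variable {ι : Type*} {Hs : ι → Type*} [∀ j, NormedAddCommGroup (Hs j)]
  [∀ j, InnerProductSpace ℂ (Hs j)] [∀ j, CompleteSpace (Hs j)]

def IsGFusionFrameOperator (W : ι → Submodule ℂ H) [∀ j, CompleteSpace (W j)] (v : ι → ℝ)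
    (Λ : ∀ j, H →L[ℂ] Hs j) (S : H →L[ℂ] H) : Prop :=
  ∀ f : H, HasSum (fun j => ((v j : ℂ) ^ 2) • pProj (W j) (adjoint (Λ j) (Λ j (pProj (W j) f))))
    (S f)

theorem IsGFusionFrameOperator.hasSum_norm_sq {W : ι → Submodule ℂ H} [∀ j, CompleteSpace (W j)]
    {v : ι → ℝ} {Λ : ∀ j, H →L[ℂ] Hs j} {S : H →L[ℂ] H} (hS : IsGFusionFrameOperator W v Λ S)
    (f : H) :
    HasSum (fun j => v j ^ 2 * ‖Λ j (pProj (W j) f)‖ ^ 2) (RCLike.re (inner ℂ f (S f))) := by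
  refine (RCLike.hasSum_re ℂ ((hS f).mapL (innerSL ℂ f))).congr_fun fun j => ?_
  rw [innerSL_apply_apply, inner_smul_right, pProj_eq_starProjection,
    ← Submodule.inner_starProjection_left_eq_right, adjoint_inner_right, inner_self_eq_norm_sq_to_K]
  simp [← Complex.ofReal_pow]

end

theorem stmt19_general {H : Type*} [NormedAddCommGroup H] [InnerProductSpace ℂ H] [CompleteSpace H]
    {ι : Type*} {Hs : ι → Type*} [∀ j, NormedAddCommGroup (Hs j)]
    [∀ j, InnerProductSpace ℂ (Hs j)] [∀ j, CompleteSpace (Hs j)]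
    (W : ι → Submodule ℂ H) [∀ j, CompleteSpace (W j)]
    (v : ι → ℝ)
    (Λ : ∀ j, H →L[ℂ] Hs j)
    (SΛ Sinv : H →L[ℂ] H)
    (hSΛ : ∀ f : H,
      HasSum (fun j => ((v j : ℂ) ^ 2) • pProj (W j) (adjoint (Λ j) (Λ j (pProj (W j) f)))) (SΛ f))
    (hinv₁ : Sinv ∘L SΛ = 1) (hinv₂ : SΛ ∘L Sinv = 1)
    (R : H →L[ℂ] H) (hR : R.IsPositive) (hRR : R ∘L R = Sinv)
    (X : ι → Submodule ℂ H) [∀ j, CompleteSpace (X j)]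
    (hX : ∀ j, X j = Submodule.map (R : H →ₗ[ℂ] H) (W j)) :
    ∀ f : H,
      HasSum (fun j => (v j) ^ 2 * ‖Λ j (pProj (W j) (R (pProj (X j) f)))‖ ^ 2) (‖f‖ ^ 2) := by
  intro f
  have hRSR : R * SΛ * R = 1 := mul_mul_eq_one_of_mul_self_eq hRR hinv₁ hinv₂
  have hproj : ∀ j, pProj (W j) (R (pProj (X j) f)) = pProj (W j) (R f) := fun j =>
    pProj_apply_apply_pProj_of_map_le hR.isSelfAdjoint (W j) (X j) (hX j).ge f
  simpa only [hproj, re_inner_apply_apply_eq_norm_sq hR.isSelfAdjoint hRSR] using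
    IsGFusionFrameOperator.hasSum_norm_sq hSΛ (R f)

theorem stmt19 {H : Type*} [NormedAddCommGroup H] [InnerProductSpace ℂ H] [CompleteSpace H]
    {ι : Type*} {Hs : ι → Type*} [∀ j, NormedAddCommGroup (Hs j)]
    [∀ j, InnerProductSpace ℂ (Hs j)] [∀ j, CompleteSpace (Hs j)]
    (W : ι → Submodule ℂ H) [∀ j, CompleteSpace (W j)]
    (v : ι → ℝ) (hv : ∀ j, 0 < v j)
    (Λ : ∀ j, H →L[ℂ] Hs j) (A B : ℝ) (hA : 0 < A) (hAB : A ≤ B)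
    (hsum : ∀ f : H, Summable fun j => (v j) ^ 2 * ‖Λ j (pProj (W j) f)‖ ^ 2)
    (hlow : ∀ f : H, A * ‖f‖ ^ 2 ≤ ∑' j, (v j) ^ 2 * ‖Λ j (pProj (W j) f)‖ ^ 2)
    (hup : ∀ f : H, ∑' j, (v j) ^ 2 * ‖Λ j (pProj (W j) f)‖ ^ 2 ≤ B * ‖f‖ ^ 2)
    (SΛ Sinv : H →L[ℂ] H)
    (hSΛ : ∀ f : H,
      HasSum (fun j => ((v j : ℂ) ^ 2) • pProj (W j) (adjoint (Λ j) (Λ j (pProj (W j) f)))) (SΛ f))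
    (hSΛpos : SΛ.IsPositive)
    (hinv₁ : Sinv ∘L SΛ = 1) (hinv₂ : SΛ ∘L Sinv = 1)
    (R : H →L[ℂ] H) (hR : R.IsPositive) (hRR : R ∘L R = Sinv)
    (X : ι → Submodule ℂ H) [∀ j, CompleteSpace (X j)]
    (hX : ∀ j, X j = Submodule.map (R : H →ₗ[ℂ] H) (W j)) :
    ∀ f : H,
      HasSum (fun j => (v j) ^ 2 * ‖Λ j (pProj (W j) (R (pProj (X j) f)))‖ ^ 2) (‖f‖ ^ 2) :=
  stmt19_general W v Λ SΛ Sinv hSΛ hinv₁ hinv₂ R hR hRR X hX
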